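/- Let R be a ring. If every acyclic complex of injective right R-modules is totally acyclic, then every acyclic complex of flat left R-modules is F-totally acyclic. -/

import Mathlib

/-! The character complex `C⁺ = Hom_ℤ(C, ℚ/ℤ)` of an acyclic complex `C` of flat left modules is an
acyclic complex of injective right modules, so by hypothesis `Hom(E, C⁺)` is exact for every
injective right module `E`. The tensor–hom adjunction identifies `Hom(E, C⁺)` with `(E ⊗_R C)⁺`,
and since `ℚ/ℤ` is an injective cogenerator, exactness of `(E ⊗_R C)⁺` forces exactness of
`E ⊗_R C`. -/

noncomputable section

open LinearMap MulOpposite TensorProduct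

/-- A (doubly infinite, cohomologically indexed) complex of `R`-modules. -/
structure Cx (R : Type) [Ring R] where
  X : ℤ → ModuleCat.{0} R
  d : ∀ n : ℤ, X n →ₗ[R] X (n + 1)
  dd : ∀ n : ℤ, (d (n + 1)).comp (d n) = 0

namespace Cx

variable {R : Type} [Ring R]

/-- The complex is exact (acyclic) everywhere. -/
def Acyclic (C : Cx R) : Prop :=
  ∀ n : ℤ, LinearMap.range (C.d n) = LinearMap.ker (C.d (n + 1))

/-- Exactness of the induced complex `Hom_R(C, M)`. -/
def HomOutExact (C : Cx R) (M : ModuleCat.{0} R) : Prop :=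
  ∀ (n : ℤ) (f : C.X (n + 1) →ₗ[R] M), f.comp (C.d n) = 0 →
    ∃ g : C.X (n + 1 + 1) →ₗ[R] M, g.comp (C.d (n + 1)) = f

/-- Exactness of the induced complex `Hom_R(J, C)`. -/
def HomInExact (C : Cx R) (J : ModuleCat.{0} R) : Prop :=
  ∀ (n : ℤ) (f : J →ₗ[R] C.X (n + 1)), (C.d (n + 1)).comp f = 0 →
    ∃ g : J →ₗ[R] C.X n, (C.d n).comp g = f

end Cx

section Tensor

variable (R : Type) [Ring R]

/-- The defining relations of the tensor product `E ⊗_R M` of a right `R`-module `E`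
and a left `R`-module `M`, inside `E ⊗_ℤ M`. -/
def ncRel (E : ModuleCat.{0} Rᵐᵒᵖ) (M : ModuleCat.{0} R) :
    Submodule ℤ (TensorProduct ℤ E M) :=
  Submodule.span ℤ
    {x | ∃ (r : R) (e : E) (m : M), x = (op r • e) ⊗ₜ[ℤ] m - e ⊗ₜ[ℤ] (r • m)}

/-- The tensor product `E ⊗_R M` of a right `R`-module and a left `R`-module. -/
abbrev NCT (E : ModuleCat.{0} Rᵐᵒᵖ) (M : ModuleCat.{0} R) : Type :=
  TensorProduct ℤ E M ⧸ ncRel R E M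

/-- Functoriality of `E ⊗_R -` in the left module argument. -/
def tmapR (E : ModuleCat.{0} Rᵐᵒᵖ) {M N : ModuleCat.{0} R} (f : M →ₗ[R] N) :
    NCT R E M →ₗ[ℤ] NCT R E N :=
  Submodule.mapQ _ _
    (TensorProduct.map LinearMap.id f.toAddMonoidHom.toIntLinearMap) (by
      rw [ncRel, Submodule.span_le]
      rintro x ⟨r, e, m, rfl⟩
      show (op r • e) ⊗ₜ[ℤ] (f m) - e ⊗ₜ[ℤ] (f (r • m)) ∈ ncRel R E N
      rw [f.map_smul]
      exact Submodule.subset_span ⟨r, e, f m, rfl⟩)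

/-- Functoriality of `- ⊗_R M` in the right module argument. -/
def tmapL {A B : ModuleCat.{0} Rᵐᵒᵖ} (g : A →ₗ[Rᵐᵒᵖ] B) (M : ModuleCat.{0} R) :
    NCT R A M →ₗ[ℤ] NCT R B M :=
  Submodule.mapQ _ _
    (TensorProduct.map g.toAddMonoidHom.toIntLinearMap LinearMap.id) (by
      rw [ncRel, Submodule.span_le]
      rintro x ⟨r, e, m, rfl⟩
      have key : TensorProduct.map g.toAddMonoidHom.toIntLinearMap (LinearMap.id (R := ℤ) (M := M))
          ((op r • e) ⊗ₜ[ℤ] m - e ⊗ₜ[ℤ] (r • m)) = (op r • g e) ⊗ₜ[ℤ] m - g e ⊗ₜ[ℤ] (r • m) := by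
        rw [map_sub, TensorProduct.map_tmul, TensorProduct.map_tmul]
        simp only [LinearMap.id_coe, id_eq, AddMonoidHom.coe_toIntLinearMap,
          LinearMap.toAddMonoidHom_coe, g.map_smul]
      have h2 : (op r • g e) ⊗ₜ[ℤ] m - g e ⊗ₜ[ℤ] (r • m) ∈ ncRel R B M :=
        Submodule.subset_span ⟨r, g e, m, rfl⟩
      rw [← key] at h2
      exact h2)

end Tensor

/-- Exactness of the induced complex `E ⊗_R C` for a complex `C` of left `R`-modules. -/
def Cx.TensorExact {R : Type} [Ring R] (C : Cx R) (E : ModuleCat.{0} Rᵐᵒᵖ) : Prop :=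
  ∀ n : ℤ, LinearMap.range (tmapR R E (C.d n)) = LinearMap.ker (tmapR R E (C.d (n + 1)))

section Tensor2

variable (R : Type) [Ring R]

/-- A left `R`-module `M` is flat if `- ⊗_R M` preserves injections of right modules. -/
def IsFlat (M : ModuleCat.{0} R) : Prop :=
  ∀ (A B : ModuleCat.{0} Rᵐᵒᵖ) (g : A →ₗ[Rᵐᵒᵖ] B),
    Function.Injective g → Function.Injective (tmapL R g M)

/-- A right `R`-module `E` is flat if `E ⊗_R -` preserves injections of left modules. -/
def IsFlatR (E : ModuleCat.{0} Rᵐᵒᵖ) : Prop :=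
  ∀ (M N : ModuleCat.{0} R) (f : M →ₗ[R] N),
    Function.Injective f → Function.Injective (tmapR R E f)

end Tensor2

section Dims

variable (R : Type) [Ring R]

/-- `M` has injective dimension at most `n`. -/
def InjDimLE (M : ModuleCat.{0} R) (n : ℕ) : Prop :=
  ∃ (E : ℕ → ModuleCat.{0} R) (d : ∀ i, E i →ₗ[R] E (i + 1)) (ε : M →ₗ[R] E 0),
    (∀ i, Module.Injective R (E i)) ∧ Function.Injective ε ∧
    LinearMap.range ε = LinearMap.ker (d 0) ∧
    (∀ i, LinearMap.range (d i) = LinearMap.ker (d (i + 1))) ∧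
    (∀ i, n < i → Subsingleton (E i))

/-- `M` has projective dimension at most `n`. -/
def ProjDimLE (M : ModuleCat.{0} R) (n : ℕ) : Prop :=
  ∃ (P : ℕ → ModuleCat.{0} R) (d : ∀ i, P (i + 1) →ₗ[R] P i) (ε : P 0 →ₗ[R] M),
    (∀ i, Module.Projective R (P i)) ∧ Function.Surjective ε ∧
    LinearMap.range (d 0) = LinearMap.ker ε ∧
    (∀ i, LinearMap.range (d (i + 1)) = LinearMap.ker (d i)) ∧
    (∀ i, n < i → Subsingleton (P i))

/-- The left `R`-module `M` has flat dimension at most `n`. -/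
def FlatDimLE (M : ModuleCat.{0} R) (n : ℕ) : Prop :=
  ∃ (F : ℕ → ModuleCat.{0} R) (d : ∀ i, F (i + 1) →ₗ[R] F i) (ε : F 0 →ₗ[R] M),
    (∀ i, IsFlat R (F i)) ∧ Function.Surjective ε ∧
    LinearMap.range (d 0) = LinearMap.ker ε ∧
    (∀ i, LinearMap.range (d (i + 1)) = LinearMap.ker (d i)) ∧
    (∀ i, n < i → Subsingleton (F i))

/-- The right `R`-module `E` has flat dimension at most `n` (as a right module). -/
def FlatDimRLE (E : ModuleCat.{0} Rᵐᵒᵖ) (n : ℕ) : Prop :=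
  ∃ (F : ℕ → ModuleCat.{0} Rᵐᵒᵖ) (d : ∀ i, F (i + 1) →ₗ[Rᵐᵒᵖ] F i) (ε : F 0 →ₗ[Rᵐᵒᵖ] E),
    (∀ i, IsFlatR R (F i)) ∧ Function.Surjective ε ∧
    LinearMap.range (d 0) = LinearMap.ker ε ∧
    (∀ i, LinearMap.range (d (i + 1)) = LinearMap.ker (d i)) ∧
    (∀ i, n < i → Subsingleton (F i))

end Dims

section Conditions

variable (R : Type) [Ring R]

/-- Every acyclic complex of projective left `R`-modules is totally acyclic. -/
def AllProjTotAc : Prop :=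
  ∀ C : Cx R, C.Acyclic → (∀ n, Module.Projective R (C.X n)) →
    ∀ M : ModuleCat.{0} R, Module.Projective R M → C.HomOutExact M

/-- Every acyclic complex of injective left `R`-modules is totally acyclic. -/
def AllInjTotAc : Prop :=
  ∀ C : Cx R, C.Acyclic → (∀ n, Module.Injective R (C.X n)) →
    ∀ J : ModuleCat.{0} R, Module.Injective R J → C.HomInExact J

/-- Every acyclic complex of flat left `R`-modules is F-totally acyclic. -/
def AllFlatFTotAc : Prop :=
  ∀ C : Cx R, C.Acyclic → (∀ n, IsFlat R (C.X n)) →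
    ∀ E : ModuleCat.{0} Rᵐᵒᵖ, Module.Injective Rᵐᵒᵖ E → C.TensorExact E

/-- Every acyclic complex of projective left `R`-modules is F-totally acyclic. -/
def AllProjFTotAc : Prop :=
  ∀ C : Cx R, C.Acyclic → (∀ n, Module.Projective R (C.X n)) →
    ∀ E : ModuleCat.{0} Rᵐᵒᵖ, Module.Injective Rᵐᵒᵖ E → C.TensorExact E

end Conditions

section Gorenstein

variable (R : Type) [Ring R]

/-- `M` is Gorenstein projective: a cycle of a totally acyclic complex of projectives. -/
def IsGProj (M : ModuleCat.{0} R) : Prop :=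
  ∃ (C : Cx R) (n : ℤ), C.Acyclic ∧ (∀ k, Module.Projective R (C.X k)) ∧
    (∀ Q : ModuleCat.{0} R, Module.Projective R Q → C.HomOutExact Q) ∧
    Nonempty (M ≃ₗ[R] LinearMap.ker (C.d n))

/-- `M` is Gorenstein injective: a cycle of a totally acyclic complex of injectives. -/
def IsGInj (M : ModuleCat.{0} R) : Prop :=
  ∃ (C : Cx R) (n : ℤ), C.Acyclic ∧ (∀ k, Module.Injective R (C.X k)) ∧
    (∀ J : ModuleCat.{0} R, Module.Injective R J → C.HomInExact J) ∧
    Nonempty (M ≃ₗ[R] LinearMap.ker (C.d n))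

/-- `M` is Gorenstein flat: a cycle of an F-totally acyclic complex of flats. -/
def IsGFlat (M : ModuleCat.{0} R) : Prop :=
  ∃ (C : Cx R) (n : ℤ), C.Acyclic ∧ (∀ k, IsFlat R (C.X k)) ∧
    (∀ E : ModuleCat.{0} Rᵐᵒᵖ, Module.Injective Rᵐᵒᵖ E → C.TensorExact E) ∧
    Nonempty (M ≃ₗ[R] LinearMap.ker (C.d n))

end Gorenstein

section CharM

/-- The character group `Hom_ℤ(M, ℚ/ℤ)`. -/
abbrev CharM (M : Type) [AddCommGroup M] : Type := M →+ AddCircle (1 : ℚ)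

/-- The character module of a left module is a right module. -/
instance charModuleOp (S : Type) [Ring S] (M : Type) [AddCommGroup M] [Module S M] :
    Module Sᵐᵒᵖ (CharM M) where
  smul s f := f.comp (DistribMulAction.toAddMonoidHom M s.unop)
  one_smul f := by apply AddMonoidHom.ext; intro m; show f ((1 : S) • m) = f m; rw [one_smul]
  mul_smul s t f := by
    apply AddMonoidHom.ext; intro m
    show f (((s * t).unop) • m) = f (t.unop • s.unop • m)
    rw [MulOpposite.unop_mul, mul_smul]
  smul_zero s := by apply AddMonoidHom.ext; intro m; rfl
  smul_add s f g := by apply AddMonoidHom.ext; intro m; rfl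
  add_smul s t f := by
    apply AddMonoidHom.ext; intro m
    show f (((s + t).unop) • m) = f (s.unop • m) + f (t.unop • m)
    rw [MulOpposite.unop_add, add_smul, map_add]
  zero_smul f := by
    apply AddMonoidHom.ext; intro m
    show f ((0 : S) • m) = 0
    rw [zero_smul, map_zero]

/-- The character module of a right module is a left module. -/
instance charModuleLeft (S : Type) [Ring S] (M : Type) [AddCommGroup M] [Module Sᵐᵒᵖ M] :
    Module S (CharM M) where
  smul s f := f.comp (DistribMulAction.toAddMonoidHom M (op s))
  one_smul f := by
    apply AddMonoidHom.ext; intro m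
    show f ((op (1 : S)) • m) = f m
    rw [op_one, one_smul]
  mul_smul s t f := by
    apply AddMonoidHom.ext; intro m
    show f ((op (s * t)) • m) = f (op t • op s • m)
    rw [op_mul, mul_smul]
  smul_zero s := by apply AddMonoidHom.ext; intro m; rfl
  smul_add s f g := by apply AddMonoidHom.ext; intro m; rfl
  add_smul s t f := by
    apply AddMonoidHom.ext; intro m
    show f ((op (s + t)) • m) = f (op s • m) + f (op t • m)
    rw [op_add, add_smul, map_add]
  zero_smul f := by
    apply AddMonoidHom.ext; intro m
    show f ((op (0 : S)) • m) = 0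
    rw [op_zero, zero_smul, map_zero]

end CharM

section Ext

variable (R : Type) [Ring R]

/-- `Ext^1_R(F, M) = 0`, phrased as: every extension of `F` by `M` splits. -/
def Ext1Zero (F M : ModuleCat.{0} R) : Prop :=
  ∀ (X : ModuleCat.{0} R) (i : M →ₗ[R] X) (p : X →ₗ[R] F),
    Function.Injective i → Function.Surjective p →
    LinearMap.range i = LinearMap.ker p →
    ∃ s : F →ₗ[R] X, p.comp s = LinearMap.id

/-- `Ext^k_R(M, N) = 0` (for `k ≥ 1`), phrased via vanishing of the `k`-th cohomology of
`Hom_R(P_•, N)` for every (augmented) projective resolution `⋯ → Q (i+1) → Q i → ⋯ → Q 0 ≅ M`. -/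
def ExtVanish (k : ℕ) (M N : ModuleCat.{0} R) : Prop :=
  ∀ (Q : ℕ → ModuleCat.{0} R) (g : ∀ i, Q (i + 1) →ₗ[R] Q i),
    (∀ i, Module.Projective R (Q (i + 1))) → Function.Surjective (g 0) →
    (∀ i, LinearMap.range (g (i + 1)) = LinearMap.ker (g i)) →
    Nonempty (M ≃ₗ[R] Q 0) →
    ∀ f : Q (k + 1) →ₗ[R] N, f.comp (g (k + 1)) = 0 →
      ∃ h : Q k →ₗ[R] N, h.comp (g k) = f

end Ext

section Characters

variable {A B C : Type} [AddCommGroup A] [AddCommGroup B] [AddCommGroup C]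

theorem CharM.exists_comp_eq_of_injective (f : A →+ B) (hf : Function.Injective f)
    (φ : CharM A) : ∃ ψ : CharM B, ∀ a, ψ (f a) = φ a := by
  obtain ⟨ψ, hψ⟩ := CharacterModule.dual_surjective_of_injective f.toIntLinearMap hf φ
  exact ⟨ψ, DFunLike.congr_fun hψ⟩

variable {S : Type} [Ring S] [Module S A] [Module S B] [Module S C]

theorem mem_range_of_forall_charM (f : A →ₗ[S] B) {x : B}
    (hx : ∀ φ : CharM B, (∀ a, φ (f a) = 0) → φ x = 0) : x ∈ LinearMap.range f := by
  rw [← Submodule.Quotient.mk_eq_zero]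
  refine CharacterModule.eq_zero_of_character_apply fun c =>
    hx (c.comp (LinearMap.range f).mkQ.toAddMonoidHom) fun a => ?_
  show c (Submodule.Quotient.mk (f a)) = 0
  rw [(Submodule.Quotient.mk_eq_zero _).mpr (LinearMap.mem_range_self f a), map_zero]

theorem CharM.exists_comp_eq_of_ker_le (g : B →ₗ[S] C) (φ : CharM B)
    (hφ : ∀ b, g b = 0 → φ b = 0) : ∃ ψ : CharM C, ∀ b, ψ (g b) = φ b := by
  let φ' : B ⧸ LinearMap.ker g →ₗ[ℤ] AddCircle (1 : ℚ) :=
    (LinearMap.ker g).restrictScalars ℤ |>.liftQ φ.toIntLinearMap hφ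
  obtain ⟨ψ, hψ⟩ := CharM.exists_comp_eq_of_injective
    ((LinearMap.ker g).liftQ g le_rfl).toAddMonoidHom
    (LinearMap.ker_eq_bot.mp (Submodule.ker_liftQ_eq_bot _ _ _ le_rfl)) φ'.toAddMonoidHom
  exact ⟨ψ, fun b => hψ (Submodule.Quotient.mk b)⟩

end Characters

section TensorCharacters

variable {R : Type} [Ring R]

theorem NCT.addMonoidHom_ext {E : ModuleCat.{0} Rᵐᵒᵖ} {M : ModuleCat.{0} R} {T : Type}
    [AddCommMonoid T] {φ ψ : NCT R E M →+ T}
    (h : ∀ (a : E) (m : M), φ (Submodule.Quotient.mk (a ⊗ₜ m)) =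
      ψ (Submodule.Quotient.mk (a ⊗ₜ m))) : φ = ψ := by
  ext x
  obtain ⟨y, rfl⟩ := Submodule.Quotient.mk_surjective _ x
  induction y using TensorProduct.induction_on with
  | zero => simp
  | tmul a m => exact h a m
  | add u v hu hv => rw [Submodule.Quotient.mk_add, map_add, map_add, hu, hv]

def NCT.charEquiv (E : ModuleCat.{0} Rᵐᵒᵖ) (M : ModuleCat.{0} R) :
    CharM (NCT R E M) ≃ (E →ₗ[Rᵐᵒᵖ] CharM M) where
  toFun φ :=
    { toFun := fun a =>
        { toFun := fun m => φ (Submodule.Quotient.mk (a ⊗ₜ m))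
          map_zero' := by simp
          map_add' := fun m m' => by
            rw [TensorProduct.tmul_add, Submodule.Quotient.mk_add, map_add] }
      map_add' := fun a a' => by
        ext m
        show φ (Submodule.Quotient.mk ((a + a') ⊗ₜ m)) = φ _ + φ _
        rw [TensorProduct.add_tmul, Submodule.Quotient.mk_add, map_add]
      map_smul' := fun s a => by
        ext m
        show φ (Submodule.Quotient.mk ((s • a) ⊗ₜ m)) =
          φ (Submodule.Quotient.mk (a ⊗ₜ (s.unop • m)))
        congr 1
        exact (Submodule.Quotient.eq _).mpr (Submodule.subset_span ⟨s.unop, a, m, by simp⟩) }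
  invFun f := (Submodule.liftQ _ (TensorProduct.lift
      { toFun := fun a => (f a).toIntLinearMap
        map_add' := fun a b => by ext m; simp
        map_smul' := fun n a => by ext m; simp }) (by
      refine Submodule.span_le.mpr ?_
      rintro _ ⟨r, a, m, rfl⟩
      change TensorProduct.lift _ _ = 0
      rw [map_sub, TensorProduct.lift.tmul, TensorProduct.lift.tmul]
      show f (op r • a) m - f a (r • m) = 0
      rw [f.map_smul]
      exact sub_self _)).toAddMonoidHom
  left_inv φ := NCT.addMonoidHom_ext fun _ _ => rfl
  right_inv _ := rfl

theorem IsFlat.injective_charM {M : ModuleCat.{0} R} (hM : IsFlat R M) :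
    Module.Injective Rᵐᵒᵖ (CharM M) where
  out X Y _ _ _ _ i hi f := by
    let i' : ModuleCat.of Rᵐᵒᵖ X →ₗ[Rᵐᵒᵖ] ModuleCat.of Rᵐᵒᵖ Y := i
    obtain ⟨ψ, hψ⟩ := CharM.exists_comp_eq_of_injective (tmapL R i' M).toAddMonoidHom
      (hM _ _ i' hi) ((NCT.charEquiv (ModuleCat.of Rᵐᵒᵖ X) M).symm f)
    exact ⟨NCT.charEquiv (ModuleCat.of Rᵐᵒᵖ Y) M ψ, fun x => AddMonoidHom.ext fun m =>
      hψ (Submodule.Quotient.mk (x ⊗ₜ m))⟩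

end TensorCharacters

section CharacterDuals

variable {R : Type} [Ring R] {M N P : Type} [AddCommGroup M] [AddCommGroup N] [AddCommGroup P]
  [Module R M] [Module R N] [Module R P]

def CharM.dual (f : M →ₗ[R] N) : CharM N →ₗ[Rᵐᵒᵖ] CharM M where
  toFun φ := φ.comp f.toAddMonoidHom
  map_add' _ _ := rfl
  map_smul' s φ := AddMonoidHom.ext fun m => by
    show φ (s.unop • f m) = φ (f (s.unop • m))
    rw [f.map_smul]

theorem CharM.dual_comp_dual (f : M →ₗ[R] N) (g : N →ₗ[R] P) :
    (CharM.dual f).comp (CharM.dual g) = CharM.dual (g.comp f) := rfl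

theorem CharM.dual_zero : CharM.dual (0 : M →ₗ[R] N) = 0 :=
  LinearMap.ext fun φ => AddMonoidHom.ext fun _ => map_zero φ

theorem CharM.range_dual_eq_ker_dual {f : M →ₗ[R] N} {g : N →ₗ[R] P}
    (hfg : LinearMap.range f = LinearMap.ker g) :
    LinearMap.range (CharM.dual g) = LinearMap.ker (CharM.dual f) := by
  apply le_antisymm
  · rw [LinearMap.range_le_ker_iff, CharM.dual_comp_dual, LinearMap.range_le_ker_iff.mp hfg.le,
      CharM.dual_zero]
  · intro φ hφ
    obtain ⟨ψ, hψ⟩ := CharM.exists_comp_eq_of_ker_le g φ fun b hb => by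
      obtain ⟨a, rfl⟩ : b ∈ LinearMap.range f := hfg ▸ hb
      exact DFunLike.congr_fun (LinearMap.mem_ker.mp hφ) a
    exact ⟨ψ, AddMonoidHom.ext hψ⟩

end CharacterDuals

section TensorExactness

variable {R : Type} [Ring R] {E : ModuleCat.{0} Rᵐᵒᵖ} {M₁ M₂ M₃ : ModuleCat.{0} R}

theorem range_tmapR_le_ker_tmapR {f : M₁ →ₗ[R] M₂} {g : M₂ →ₗ[R] M₃} (hgf : g.comp f = 0) :
    LinearMap.range (tmapR R E f) ≤ LinearMap.ker (tmapR R E g) := by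
  rw [LinearMap.range_le_ker_iff]
  suffices ((tmapR R E g).comp (tmapR R E f)).toAddMonoidHom = 0 from
    LinearMap.toAddMonoidHom_injective this
  refine NCT.addMonoidHom_ext fun a m => ?_
  show Submodule.Quotient.mk (a ⊗ₜ g (f m)) = 0
  rw [← LinearMap.comp_apply, hgf, LinearMap.zero_apply, TensorProduct.tmul_zero,
    Submodule.Quotient.mk_zero]

theorem ker_tmapR_le_range_tmapR (f : M₁ →ₗ[R] M₂) (g : M₂ →ₗ[R] M₃)
    (hE : ∀ u : E →ₗ[Rᵐᵒᵖ] CharM M₂, (CharM.dual f).comp u = 0 →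
      ∃ v : E →ₗ[Rᵐᵒᵖ] CharM M₃, (CharM.dual g).comp v = u) :
    LinearMap.ker (tmapR R E g) ≤ LinearMap.range (tmapR R E f) := by
  intro x hx
  refine mem_range_of_forall_charM _ fun φ hφ => ?_
  obtain ⟨v, hv⟩ := hE (NCT.charEquiv E M₂ φ) <| LinearMap.ext fun a => AddMonoidHom.ext fun m =>
    hφ (Submodule.Quotient.mk (a ⊗ₜ m))
  have hφv : φ = ((NCT.charEquiv E M₃).symm v).comp (tmapR R E g).toAddMonoidHom :=
    NCT.addMonoidHom_ext fun a m => (DFunLike.congr_fun (LinearMap.congr_fun hv a) m).symm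
  rw [hφv, AddMonoidHom.comp_apply, LinearMap.toAddMonoidHom_coe, LinearMap.mem_ker.mp hx,
    map_zero]

end TensorExactness

namespace Cx

variable {R : Type} [Ring R] (C : Cx R)

/-- `C.d a` with its target reindexed along `a + 1 = b`: in the character complex the indices
`-(n + 1) + 1` and `-n` agree only propositionally. -/
def dShift {a b : ℤ} (h : a + 1 = b) : C.X a →ₗ[R] C.X b :=
  Eq.rec (motive := fun b _ => C.X a →ₗ[R] C.X b) (C.d a) h

theorem dShift_comp_dShift {a b c : ℤ} (hab : a + 1 = b) (hbc : b + 1 = c) :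
    (C.dShift hbc).comp (C.dShift hab) = 0 := by
  subst hab hbc
  exact C.dd a

theorem Acyclic.range_dShift {C : Cx R} (hC : C.Acyclic) {a b c : ℤ} (hab : a + 1 = b)
    (hbc : b + 1 = c) : LinearMap.range (C.dShift hab) = LinearMap.ker (C.dShift hbc) := by
  subst hab hbc
  exact hC a

/-- The character complex `C⁺`, with `C⁺ⁿ = (C₋ₙ)⁺`. -/
def dual : Cx Rᵐᵒᵖ where
  X n := ModuleCat.of Rᵐᵒᵖ (CharM (C.X (-n)))
  d n := CharM.dual (C.dShift (show -(n + 1) + 1 = -n by ring))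
  dd n := by
    rw [CharM.dual_comp_dual, dShift_comp_dShift, CharM.dual_zero]

theorem Acyclic.dual {C : Cx R} (hC : C.Acyclic) : C.dual.Acyclic := fun _ =>
  CharM.range_dual_eq_ker_dual (hC.range_dShift _ _)

theorem ker_tmapR_dShift_le_range {E : ModuleCat.{0} Rᵐᵒᵖ} (hE : C.dual.HomInExact E)
    {a b c : ℤ} (hab : a + 1 = b) (hbc : b + 1 = c) :
    LinearMap.ker (tmapR R E (C.dShift hbc)) ≤ LinearMap.range (tmapR R E (C.dShift hab)) := by
  obtain ⟨m, rfl⟩ : ∃ m, -(m + 1 + 1) = a := ⟨-(a + 1 + 1), by ring⟩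
  obtain rfl : b = -(m + 1) := by omega
  obtain rfl : c = -m := by omega
  exact ker_tmapR_le_range_tmapR _ _ (hE m)

theorem tensorExact_of_homInExact_dual {E : ModuleCat.{0} Rᵐᵒᵖ} (hE : C.dual.HomInExact E) :
    C.TensorExact E := fun n =>
  le_antisymm (range_tmapR_le_ker_tmapR (C.dd n)) (C.ker_tmapR_dShift_le_range hE rfl rfl)

end Cx

/-- if every acyclic complex of injective right `R`-modules is totally acyclic,
then every acyclic complex of flat left `R`-modules is F-totally acyclic. -/
theorem stmt4 (R : Type) [Ring R] (h : AllInjTotAc Rᵐᵒᵖ) : AllFlatFTotAc R :=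
  fun C hC hflat E hE => C.tensorExact_of_homInExact_dual
    (h C.dual hC.dual (fun k => (hflat (-k)).injective_charM) E hE)
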